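/- Correctness of the reduction showing fallback voting resistant to constructive control by partition of voters in model TP: let (C,V) be the fallback voting election defined below from an X3C instance (B,S) with n > m+1. Then S contains an exact cover for B if and only if there exists a partition of V into disjoint sublists V1 and V2 such that w is the unique FV winner of the final-round election (W1 ∪ W2, V), where Wi denotes the set of FV winners of the subelection (C, Vi). -/

import Mathlib

/-!
Fallback voting (Brams and Sanver).  A vote is represented by the list of the
candidates the voter approves of, in order of preference (most preferred
first); all candidates not occurring in the list are disapproved.  The voter
collection is a multiset of such votes.
-/

namespace FV

variable {α : Type} [DecidableEq α]

/-- The level-`i` score of candidate `c` in the election with votes `V`: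
the number of voters who approve of `c` and rank `c` among their top `i`
approved candidates. -/
def levelScore (V : Multiset (List α)) (i : ℕ) (c : α) : ℕ :=
  (V.filter (fun v => c ∈ v.take i)).card

/-- The approval score of candidate `c`: the number of voters approving of `c`. -/
def apprScore (V : Multiset (List α)) (c : α) : ℕ :=
  (V.filter (fun v => c ∈ v)).card

/-- Restriction of the votes to the candidate set `C`: each voter's approval
set and ranking are restricted to `C`. -/
def restrict (C : Finset α) (V : Multiset (List α)) : Multiset (List α) :=
  V.map (fun v => v.filter (fun x => decide (x ∈ C)))

instance instDecMaj (C : Finset α) (V : Multiset (List α)) :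
    DecidablePred (fun i =>
      i ∈ Finset.Icc 1 C.card ∧ ∃ c ∈ C, 2 * levelScore V i c > Multiset.card V) :=
  fun _ => inferInstance

/-- The set of fallback-voting winners of the election `(C,V)`:
if some level `i` with `1 ≤ i ≤ ‖C‖` exists at which some candidate of `C`
has a strict majority (level-`i` score exceeding `‖V‖/2`), then the winners
are the candidates with the largest level-`i₀` score, where `i₀` is the
smallest such level; otherwise the winners are the candidates with the largest
approval score. -/
def winners (C : Finset α) (V : Multiset (List α)) : Finset α :=
  if h : ∃ i, i ∈ Finset.Icc 1 C.card ∧ ∃ c ∈ C, 2 * levelScore V i c > Multiset.card V then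
    C.filter (fun c => ∀ d ∈ C, levelScore V (Nat.find h) d ≤ levelScore V (Nat.find h) c)
  else
    C.filter (fun c => ∀ d ∈ C, apprScore V d ≤ apprScore V c)

/-- The FV winners of the election `(C,V)` restricted to the candidate set `C`. -/
def fwinners (C : Finset α) (V : Multiset (List α)) : Finset α :=
  winners C (restrict C V)

end FV

/-! ### The construction for constructive control by partition of voters, TP -/

/-- Candidates: `B = {b_0,…,b_{3m-1}}`, `F = {f_0,…,f_{n+m}}`,
`Z = {z_0,…,z_{n-1}}`, and the candidates `w`, `x`, `y`. -/
inductive CandF (m n : ℕ) where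
  | b (j : Fin (3*m))
  | f (p : Fin (n+m+1))
  | z (i : Fin n)
  | w
  | x
  | y
deriving DecidableEq

/-- The elements of a subset `T ⊆ B`, ranked according to the fixed linear
order on `B`. -/
def blistF {m n : ℕ} (T : Finset (Fin (3*m))) : List (CandF m n) :=
  (T.sort (· ≤ ·)).map CandF.b

/-- All of `B`, ranked. -/
def BallF (m n : ℕ) : List (CandF m n) :=
  (List.finRange (3*m)).map CandF.b

/-- `ℓ_j = ‖{S_i ∈ S : b_j ∈ S_i}‖`. -/
def ellF {m n : ℕ} (S : Fin n → Finset (Fin (3*m))) (j : Fin (3*m)) : ℕ :=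
  (Finset.univ.filter (fun i => j ∈ S i)).card

/-- `B_i = {b_j ∈ B : i ≤ n − ℓ_j}` (with `i : Fin n` zero-based, so the
condition reads `i+1 ≤ n − ℓ_j`). -/
def BiF {m n : ℕ} (S : Fin n → Finset (Fin (3*m))) (i : Fin n) : Finset (Fin (3*m)) :=
  Finset.univ.filter (fun j => i.1 + 1 ≤ n - ellF S j)

/-- The candidates of `Z`, ranked. -/
def ZlistF (m n : ℕ) : List (CandF m n) :=
  (List.finRange n).map CandF.z

/-- The candidates of `Z − {z_i}`, ranked. -/
def ZminusF (m n : ℕ) (i : Fin n) : List (CandF m n) :=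
  ((List.finRange n).filter (fun t => decide (t ≠ i))).map CandF.z

/-- The candidate set `C = B ∪ F ∪ Z ∪ {w,x,y}`. -/
def CF (m n : ℕ) : Finset (CandF m n) :=
  (Finset.univ : Finset (Fin (3*m))).image CandF.b ∪
  (Finset.univ : Finset (Fin (n+m+1))).image CandF.f ∪
  (Finset.univ : Finset (Fin n)).image CandF.z ∪
  {CandF.w, CandF.x, CandF.y}

/-- The `6n+2m+2` voters: for each `i`, one voter `y S_i | rest`; for each
`i`, one voter `y z_i | rest`; for each `i`, one voter `(Z−{z_i}) B_i w | rest`;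
`n` voters `Z B w | rest`; `n+m+1` voters `x | rest`; and for each `p`, one
voter `f_p | rest`. -/
def VF (m n : ℕ) (S : Fin n → Finset (Fin (3*m))) : Multiset (List (CandF m n)) :=
  (∑ i : Fin n, ({CandF.y :: blistF (S i)} : Multiset (List (CandF m n)))) +
  (∑ i : Fin n, ({[CandF.y, CandF.z i]} : Multiset (List (CandF m n)))) +
  (∑ i : Fin n,
    ({ZminusF m n i ++ blistF (BiF S i) ++ [CandF.w]} : Multiset (List (CandF m n)))) +
  Multiset.replicate n (ZlistF m n ++ BallF m n ++ [CandF.w]) +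
  Multiset.replicate (n+m+1) [CandF.x] +
  (∑ p : Fin (n+m+1), ({[CandF.f p]} : Multiset (List (CandF m n))))

/-!
In the final round `(W₁ ∪ W₂, V)` nobody has a majority; `w`, `y`, every `z_j` and every `b_j`
are approved by `2n` voters of `V`, everybody else by fewer. So `w` is the unique final winner
iff `w` wins one of the subelections and none of its rivals `y`, `z_j`, `b_j` wins either.

Given an exact cover `I`, let `V₁` consist of the voters `y S_i` with `i ∈ I`, all voters `y z_i`
and all voters `x`: then `x` has a majority at level 1 in `V₁`. In the rest `V₂` nobody has a
majority and `w` is the unique approval winner.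

Conversely, let `w` win `V₁` without rivals. Whatever level decides `V₁`, it is at least `n`,
since otherwise `w` would score `0`; from there on each `z_j` counts all its approvals, and `w`
beats all of them only if `V₁` contains every voter `(Z−{z_i}) B_i w` and no voter `y z_i`. Then
`w` is ranked high enough in all its votes, so each `b_j` counts all its approvals too, and
beating `b_j` means that some voter `y S_i` with `b_j ∈ S_i` lies in `V₂`. These `S_i` cover `B`,
and as `y` does not win `V₂` there are at most `m` of them: they form an exact cover.
-/

namespace FV

variable {α : Type} [DecidableEq α]

section Scores

variable {V : Multiset (List α)} {k : ℕ} {c : α}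

lemma apprScore_eq_countP (V : Multiset (List α)) (c : α) :
    apprScore V c = V.countP (c ∈ ·) :=
  (Multiset.countP_eq_card_filter _ _).symm

@[simp] lemma apprScore_add (V W : Multiset (List α)) (c : α) :
    apprScore (V + W) c = apprScore V c + apprScore W c := by
  simp only [apprScore_eq_countP, Multiset.countP_add]

lemma apprScore_sum {ι : Type*} (I : Finset ι) (g : ι → Multiset (List α)) (c : α) :
    apprScore (∑ i ∈ I, g i) c = ∑ i ∈ I, apprScore (g i) c := by
  simp only [apprScore_eq_countP]
  exact map_sum (Multiset.countPAddMonoidHom _) g I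

@[simp] lemma apprScore_singleton (v : List α) (c : α) :
    apprScore {v} c = if c ∈ v then 1 else 0 := by
  rw [apprScore_eq_countP, ← Multiset.cons_zero, Multiset.countP_cons]
  simp

@[simp] lemma apprScore_replicate (t : ℕ) (v : List α) (c : α) :
    apprScore (Multiset.replicate t v) c = if c ∈ v then t else 0 := by
  rw [← Multiset.nsmul_singleton, apprScore_eq_countP, ← Multiset.coe_countPAddMonoidHom,
    map_nsmul, Multiset.coe_countPAddMonoidHom, ← apprScore_eq_countP, apprScore_singleton]
  split <;> simp

lemma levelScore_le_apprScore (V : Multiset (List α)) (k : ℕ) (c : α) :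
    levelScore V k c ≤ apprScore V c :=
  Multiset.card_le_card <| Multiset.monotone_filter_right _ fun v hv => List.take_subset k v hv

lemma levelScore_eq_apprScore_iff :
    levelScore V k c = apprScore V c ↔ ∀ v ∈ V, c ∈ v → c ∈ v.take k := by
  have hle : V.filter (fun v => c ∈ v.take k) ≤ V.filter (fun v => c ∈ v) :=
    Multiset.monotone_filter_right _ fun v hv => List.take_subset k v hv
  constructor
  · intro h v hv hcv
    have heq := Multiset.eq_of_le_of_card_le hle h.ge
    have : v ∈ V.filter (fun v => c ∈ v.take k) := heq ▸ Multiset.mem_filter.2 ⟨hv, hcv⟩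
    exact (Multiset.mem_filter.1 this).2
  · intro h
    exact congrArg _ (Multiset.filter_congr fun v hv => ⟨fun h' => List.take_subset k v h', h v hv⟩)

lemma levelScore_eq_zero (h : ∀ v ∈ V, c ∉ v.take k) : levelScore V k c = 0 := by
  simpa [levelScore, Multiset.filter_eq_nil] using h

lemma apprScore_restrict_of_mem {C : Finset α} (hc : c ∈ C) (V : Multiset (List α)) :
    apprScore (restrict C V) c = apprScore V c := by
  simp only [apprScore, restrict, Multiset.filter_map, Multiset.card_map, Function.comp_def,
    List.mem_filter, hc, decide_true, and_true]

end Scores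

section Winners

variable {C : Finset α} {V : Multiset (List α)}

def decisiveScore (C : Finset α) (V : Multiset (List α)) : α → ℕ :=
  if h : ∃ i, i ∈ Finset.Icc 1 C.card ∧ ∃ c ∈ C, 2 * levelScore V i c > Multiset.card V then
    levelScore V (Nat.find h)
  else apprScore V

lemma mem_winners {c : α} :
    c ∈ winners C V ↔ c ∈ C ∧ ∀ d ∈ C, decisiveScore C V d ≤ decisiveScore C V c := by
  unfold winners decisiveScore
  split <;> exact Finset.mem_filter

lemma decisiveScore_cases (C : Finset α) (V : Multiset (List α)) :
    decisiveScore C V = apprScore V ∨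
      ∃ k, decisiveScore C V = levelScore V k ∧
        ∃ c ∈ C, Multiset.card V < 2 * levelScore V k c := by
  unfold decisiveScore
  split
  · next h => exact Or.inr ⟨_, rfl, (Nat.find_spec h).2⟩
  · exact Or.inl rfl

lemma decisiveScore_le_apprScore (c : α) : decisiveScore C V c ≤ apprScore V c := by
  rcases decisiveScore_cases C V with h | ⟨k, h, -⟩ <;> rw [h]
  exact levelScore_le_apprScore V k c

lemma decisiveScore_lt_of_mem_winners {c d : α} (hc : c ∈ winners C V) (hd : d ∈ C)
    (hd' : d ∉ winners C V) : decisiveScore C V d < decisiveScore C V c := by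
  rw [mem_winners] at hc hd'
  push Not at hd'
  obtain ⟨e, he, hlt⟩ := hd' hd
  exact hlt.trans_le (hc.2 e he)

lemma winners_nonempty (hC : C.Nonempty) : (winners C V).Nonempty := by
  obtain ⟨c, hc, hmax⟩ := Finset.exists_max_image C (decisiveScore C V) hC
  exact ⟨c, mem_winners.2 ⟨hc, hmax⟩⟩

lemma winners_eq_singleton {c : α} (hc : c ∈ C)
    (hlt : ∀ d ∈ C, d ≠ c → decisiveScore C V d < decisiveScore C V c) :
    winners C V = {c} := by
  ext d
  rw [mem_winners, Finset.mem_singleton]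
  constructor
  · rintro ⟨hd, hmax⟩
    by_contra hdc
    exact (hmax c hc).not_gt (hlt d hd hdc)
  · rintro rfl
    refine ⟨hc, fun e he => ?_⟩
    rcases eq_or_ne e d with rfl | hed
    · exact le_rfl
    · exact (hlt e he hed).le

lemma decisiveScore_eq_apprScore_of_no_majority
    (h : ∀ c ∈ C, 2 * apprScore V c ≤ Multiset.card V) : decisiveScore C V = apprScore V := by
  rw [decisiveScore, dif_neg]
  rintro ⟨i, -, c, hc, hgt⟩
  have := levelScore_le_apprScore V i c
  have := h c hc
  omega

lemma decisiveScore_eq_levelScore_one {c : α} (hc : c ∈ C)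
    (h : Multiset.card V < 2 * levelScore V 1 c) : decisiveScore C V = levelScore V 1 := by
  have hmaj : 1 ∈ Finset.Icc 1 C.card ∧ ∃ c ∈ C, 2 * levelScore V 1 c > Multiset.card V :=
    ⟨Finset.mem_Icc.2 ⟨le_rfl, Finset.card_pos.2 ⟨c, hc⟩⟩, c, hc, h⟩
  have hex : ∃ i, i ∈ Finset.Icc 1 C.card ∧ ∃ c ∈ C, 2 * levelScore V i c > Multiset.card V :=
    ⟨1, hmaj⟩
  rw [decisiveScore, dif_pos hex]
  have := (Finset.mem_Icc.1 (Nat.find_spec hex).1).1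
  have := Nat.find_min' hex hmaj
  congr
  omega

/-- A majority level gives the winner `w` a positive score, so it is at least `K` when `w` is
never ranked among the top `k < K`. -/
lemma decisiveScore_eq_apprScore {w c : α} {K : ℕ} (hw : w ∈ winners C V)
    (hwK : ∀ k < K, ∀ v ∈ V, w ∉ v.take k)
    (hc : ∀ k, K ≤ k → decisiveScore C V = levelScore V k → ∀ v ∈ V, c ∈ v → c ∈ v.take k) :
    decisiveScore C V c = apprScore V c := by
  rcases decisiveScore_cases C V with h | ⟨k, h, d, hd, hmaj⟩
  · rw [h]
  · have hKk : K ≤ k := by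
      by_contra hlt
      have hd_le := (mem_winners.1 hw).2 d hd
      rw [h, levelScore_eq_zero (hwK k (not_le.1 hlt))] at hd_le
      omega
    rw [h]
    exact levelScore_eq_apprScore_iff.2 (hc k hKk h)

lemma mem_fwinners_of_no_majority {D : Finset α}
    (h : ∀ c ∈ D, 2 * apprScore V c ≤ Multiset.card V) {c : α} :
    c ∈ fwinners D V ↔ c ∈ D ∧ ∀ d ∈ D, apprScore V d ≤ apprScore V c := by
  have hres : ∀ d ∈ D, apprScore (restrict D V) d = apprScore V d :=
    fun d hd => apprScore_restrict_of_mem hd V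
  have hnomaj : ∀ d ∈ D, 2 * apprScore (restrict D V) d ≤ Multiset.card (restrict D V) := by
    intro d hd
    rw [hres d hd, restrict, Multiset.card_map]
    exact h d hd
  rw [fwinners, mem_winners, decisiveScore_eq_apprScore_of_no_majority hnomaj]
  refine and_congr_right fun hc => forall₂_congr fun d hd => ?_
  rw [hres d hd, hres c hc]

end Winners

end FV

section Lists

variable {γ : Type} {l l₁ l₂ : List γ} {a c : γ} {k : ℕ}

lemma List.mem_take_append_of_mem_left (hk : l₁.length ≤ k) (hc : c ∈ l₁) :
    c ∈ (l₁ ++ l₂).take k := by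
  rw [List.take_append, List.take_of_length_le hk]
  exact List.mem_append_left _ hc

lemma List.notMem_take_append_of_notMem_left (hk : k ≤ l₁.length) (hc : c ∉ l₁) :
    c ∉ (l₁ ++ l₂).take k := by
  rw [List.take_append_of_le_length hk]
  exact fun h => hc (List.take_subset k l₁ h)

lemma List.mem_take_of_last_mem_take (ha : a ∉ l) (hak : a ∈ (l ++ [a]).take k)
    (hc : c ∈ l ++ [a]) : c ∈ (l ++ [a]).take k := by
  by_cases hk : l.length < k
  · rwa [List.take_of_length_le (by rw [List.length_append, List.length_singleton]; omega)]
  · exact absurd hak (notMem_take_append_of_notMem_left (not_lt.1 hk) ha)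

end Lists

section Multisets

variable {γ : Type} [DecidableEq γ]

lemma Multiset.exists_add_of_le_add {M X Y : Multiset γ} (h : M ≤ X + Y) :
    ∃ X₁ Y₁, X₁ ≤ X ∧ Y₁ ≤ Y ∧ M = X₁ + Y₁ := by
  refine ⟨M ∩ X, M - M ∩ X, Multiset.inter_le_right, ?_, ?_⟩
  · rw [Multiset.le_iff_count]
    intro a
    have hc := Multiset.le_iff_count.1 h a
    rw [Multiset.count_add] at hc
    rw [Multiset.count_sub, Multiset.count_inter]
    omega
  · rw [add_tsub_cancel_of_le Multiset.inter_le_left]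

lemma Multiset.exists_subset_of_le_sum_singleton {ι : Type} [DecidableEq ι] {g : ι → γ}
    (I : Finset ι) : ∀ {M : Multiset γ}, M ≤ ∑ i ∈ I, {g i} → ∃ J ⊆ I, M = ∑ i ∈ J, {g i} := by
  induction I using Finset.induction_on with
  | empty => exact fun h => ⟨∅, subset_rfl, by simpa using h⟩
  | insert a I ha ih =>
    intro M h
    rw [Finset.sum_insert ha] at h
    obtain ⟨X, Y, hX, hY, rfl⟩ := exists_add_of_le_add h
    obtain ⟨J, hJ, rfl⟩ := ih hY
    rcases Multiset.le_singleton.1 hX with rfl | rfl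
    · exact ⟨J, hJ.trans (Finset.subset_insert a I), zero_add _⟩
    · exact ⟨insert a J, Finset.insert_subset_insert a hJ,
        by rw [Finset.sum_insert fun h => ha (hJ h)]⟩

end Multisets

lemma Finset.card_filter_add_card_filter_compl {ι : Type} [Fintype ι] [DecidableEq ι]
    (I : Finset ι) (p : ι → Prop) [DecidablePred p] :
    (I.filter p).card + (Iᶜ.filter p).card = (Finset.univ.filter p).card := by
  rw [← Finset.card_union_of_disjoint (Finset.disjoint_filter_filter disjoint_compl_right),
    ← Finset.filter_union, Finset.union_compl]

section ExactCover

variable {ι β : Type} (S : ι → Finset β) {I : Finset ι} {k : ℕ}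

def IsExactCover (I : Finset ι) : Prop :=
  ∀ b, ∃! i, i ∈ I ∧ b ∈ S i

lemma isExactCover_singleton_of_eq_univ [Fintype β] {i : ι} (hi : S i = Finset.univ) :
    IsExactCover S {i} :=
  fun b => ⟨i, ⟨Finset.mem_singleton_self i, hi ▸ Finset.mem_univ b⟩,
    fun _ hj => Finset.mem_singleton.1 hj.1⟩

variable [DecidableEq β]

lemma sum_card_filter_mem [Fintype β] (I : Finset ι) :
    ∑ b, (I.filter (b ∈ S ·)).card = ∑ i ∈ I, (S i).card := by
  have h := Finset.sum_card_bipartiteAbove_eq_sum_card_bipartiteBelow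
    (s := I) (t := Finset.univ) (r := fun i b => b ∈ S i)
  simpa [Finset.bipartiteAbove, Finset.bipartiteBelow] using h.symm

lemma card_filter_mem_eq_one_iff (b : β) :
    (I.filter (b ∈ S ·)).card = 1 ↔ ∃! i, i ∈ I ∧ b ∈ S i := by
  simp only [Finset.card_eq_one_iff_existsUnique, Finset.mem_filter]

lemma IsExactCover.card_mul_eq [Fintype β] (hS : ∀ i, (S i).card = k) (h : IsExactCover S I) :
    k * I.card = Fintype.card β := by
  have hsum := sum_card_filter_mem S I
  simp only [(card_filter_mem_eq_one_iff S _).2 (h _), hS, Finset.sum_const, smul_eq_mul,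
    Finset.card_univ, mul_one] at hsum
  rw [hsum, mul_comm]

lemma isExactCover_of_cover [Fintype β] (hS : ∀ i, (S i).card = k)
    (hcov : ∀ b, ∃ i ∈ I, b ∈ S i) (hcard : k * I.card ≤ Fintype.card β) : IsExactCover S I := by
  have hpos : ∀ b ∈ Finset.univ, 1 ≤ (I.filter (b ∈ S ·)).card := fun b _ =>
    let ⟨i, hi, hb⟩ := hcov b
    Finset.card_pos.2 ⟨i, Finset.mem_filter.2 ⟨hi, hb⟩⟩
  have hsum : ∑ b, (I.filter (b ∈ S ·)).card ≤ ∑ _b : β, 1 := by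
    simpa [sum_card_filter_mem, hS, mul_comm] using hcard
  have heq := (Finset.sum_eq_sum_iff_of_le hpos).1 (le_antisymm (Finset.sum_le_sum hpos) hsum)
  exact fun b => (card_filter_mem_eq_one_iff S b).1 (heq b (Finset.mem_univ b)).symm

end ExactCover

section Construction

open FV

variable {m n : ℕ}

/-- The sublist of `VF m n S` made of the voters `y S_i` for `i ∈ IA`, `y z_i` for `i ∈ IB`,
`(Z−{z_i}) B_i w` for `i ∈ IC`, `t` voters `Z B w`, `r` voters `x` and `f_p` for `p ∈ IF`. -/
def subVF (S : Fin n → Finset (Fin (3*m))) (IA IB IC : Finset (Fin n)) (t r : ℕ)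
    (IF : Finset (Fin (n+m+1))) : Multiset (List (CandF m n)) :=
  (∑ i ∈ IA, ({CandF.y :: blistF (S i)} : Multiset (List (CandF m n)))) +
  (∑ i ∈ IB, ({[CandF.y, CandF.z i]} : Multiset (List (CandF m n)))) +
  (∑ i ∈ IC,
    ({ZminusF m n i ++ blistF (BiF S i) ++ [CandF.w]} : Multiset (List (CandF m n)))) +
  Multiset.replicate t (ZlistF m n ++ BallF m n ++ [CandF.w]) +
  Multiset.replicate r [CandF.x] +
  (∑ p ∈ IF, ({[CandF.f p]} : Multiset (List (CandF m n))))

variable {S : Fin n → Finset (Fin (3*m))}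

lemma VF_eq_subVF :
    VF m n S = subVF S Finset.univ Finset.univ Finset.univ n (n+m+1) Finset.univ := rfl

@[simp] lemma mem_blistF {T : Finset (Fin (3*m))} {c : CandF m n} :
    c ∈ blistF T ↔ ∃ j ∈ T, CandF.b j = c := by
  simp [blistF]

@[simp] lemma mem_ZminusF {i : Fin n} {c : CandF m n} :
    c ∈ ZminusF m n i ↔ ∃ j, j ≠ i ∧ CandF.z j = c := by
  simp [ZminusF]

@[simp] lemma length_blistF (T : Finset (Fin (3*m))) : (blistF (n := n) T).length = T.card := by
  simp [blistF]

@[simp] lemma length_ZlistF : (ZlistF m n).length = n := by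
  simp [ZlistF]

@[simp] lemma length_ZminusF (i : Fin n) : (ZminusF m n i).length = n - 1 := by
  have h := List.length_erase_of_mem (List.mem_finRange i)
  rw [List.length_finRange, List.Nodup.erase_eq_filter (List.nodup_finRange n)] at h
  rw [ZminusF, List.length_map, ← h]
  congr 2
  funext t
  by_cases ht : t = i <;> simp [ht]

@[simp] lemma mem_CF (c : CandF m n) : c ∈ CF m n := by
  cases c <;> simp [CF]

lemma fwinners_CF (V : Multiset (List (CandF m n))) : fwinners (CF m n) V = winners (CF m n) V := by
  rw [fwinners, restrict]
  congr 1
  conv_rhs => rw [← Multiset.map_id V]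
  exact Multiset.map_congr rfl fun v _ => List.filter_eq_self.2 fun c _ => by simp

lemma ellF_le (j : Fin (3*m)) : ellF S j ≤ n :=
  (Finset.card_filter_le _ _).trans (Finset.card_fin n).le

lemma card_filter_mem_BiF (j : Fin (3*m)) :
    (Finset.univ.filter (j ∈ BiF S ·)).card = n - ellF S j := by
  have h : Finset.univ.filter (j ∈ BiF S ·) =
      Finset.univ.filter (fun i : Fin n => i < n - ellF S j) := by
    ext i
    simp only [BiF, Finset.mem_filter, Finset.mem_univ, true_and]
    omega
  rw [h, Fin.card_filter_val_lt]
  omega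

section ApprovalScores

variable (IA IB IC : Finset (Fin n)) (t r : ℕ) (IF : Finset (Fin (n+m+1)))

lemma apprScore_subVF_w : apprScore (subVF S IA IB IC t r IF) CandF.w = IC.card + t := by
  simp [subVF, apprScore_sum, ZlistF, BallF]

lemma apprScore_subVF_y : apprScore (subVF S IA IB IC t r IF) CandF.y = IA.card + IB.card := by
  simp [subVF, apprScore_sum, ZlistF, BallF]

lemma apprScore_subVF_x : apprScore (subVF S IA IB IC t r IF) CandF.x = r := by
  simp [subVF, apprScore_sum, ZlistF, BallF]

lemma apprScore_subVF_f (p : Fin (n+m+1)) :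
    apprScore (subVF S IA IB IC t r IF) (CandF.f p) = if p ∈ IF then 1 else 0 := by
  simp [subVF, apprScore_sum, ZlistF, BallF]

lemma apprScore_subVF_z (j : Fin n) : apprScore (subVF S IA IB IC t r IF) (CandF.z j) =
    (if j ∈ IB then 1 else 0) + (IC.erase j).card + t := by
  simp [subVF, apprScore_sum, ZlistF, BallF, Finset.sum_ite, Finset.filter_ne]

lemma apprScore_subVF_b (j : Fin (3*m)) : apprScore (subVF S IA IB IC t r IF) (CandF.b j) =
    (IA.filter (j ∈ S ·)).card + (IC.filter (j ∈ BiF S ·)).card + t := by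
  simp [subVF, apprScore_sum, ZlistF, BallF]

lemma card_subVF : Multiset.card (subVF S IA IB IC t r IF) =
    IA.card + IB.card + IC.card + t + r + IF.card := by
  simp [subVF]

lemma subVF_add_subVF_compl (ht : t ≤ n) (hr : r ≤ n+m+1) :
    subVF S IA IB IC t r IF + subVF S IAᶜ IBᶜ ICᶜ (n - t) (n+m+1 - r) IFᶜ = VF m n S := by
  have hrep (a b : ℕ) (hab : a ≤ b) (v : List (CandF m n)) :
      Multiset.replicate a v + Multiset.replicate (b - a) v = Multiset.replicate b v := by
    rw [← Multiset.replicate_add, Nat.add_sub_cancel' hab]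
  rw [VF, subVF, subVF, ← Finset.sum_add_sum_compl IA, ← Finset.sum_add_sum_compl IB,
    ← Finset.sum_add_sum_compl IC, ← hrep t n ht, ← hrep r _ hr, ← Finset.sum_add_sum_compl IF]
  abel

@[elab_as_elim]
lemma subVF_induction {P : List (CandF m n) → Prop} (v : List (CandF m n))
    (hv : v ∈ subVF S IA IB IC t r IF) (hA : ∀ i, P (CandF.y :: blistF (S i)))
    (hB : ∀ i, P [CandF.y, CandF.z i])
    (hC : ∀ i, P (ZminusF m n i ++ blistF (BiF S i) ++ [CandF.w]))
    (hD : P (ZlistF m n ++ BallF m n ++ [CandF.w])) (hE : P [CandF.x])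
    (hF : ∀ p, P [CandF.f p]) : P v := by
  simp only [subVF, Multiset.mem_add, Multiset.mem_sum, Multiset.mem_singleton,
    Multiset.mem_replicate] at hv
  rcases hv with ((((⟨i, -, rfl⟩ | ⟨i, -, rfl⟩) | ⟨i, -, rfl⟩) | ⟨-, rfl⟩) | ⟨-, rfl⟩) | ⟨p, -, rfl⟩
  exacts [hA i, hB i, hC i, hD, hE, hF p]

end ApprovalScores

lemma exists_subVF_eq_of_le {V : Multiset (List (CandF m n))} (h : V ≤ VF m n S) :
    ∃ IA IB IC t r IF, V = subVF S IA IB IC t r IF := by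
  obtain ⟨V₅, VF', h₅, hF, rfl⟩ := Multiset.exists_add_of_le_add h
  obtain ⟨V₄, VE, h₄, hE, rfl⟩ := Multiset.exists_add_of_le_add h₅
  obtain ⟨V₃, VD, h₃, hD, rfl⟩ := Multiset.exists_add_of_le_add h₄
  obtain ⟨VAB, VC, hAB, hC, rfl⟩ := Multiset.exists_add_of_le_add h₃
  obtain ⟨VA, VB, hA, hB, rfl⟩ := Multiset.exists_add_of_le_add hAB
  obtain ⟨IA, -, rfl⟩ := Multiset.exists_subset_of_le_sum_singleton _ hA
  obtain ⟨IB, -, rfl⟩ := Multiset.exists_subset_of_le_sum_singleton _ hB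
  obtain ⟨IC, -, rfl⟩ := Multiset.exists_subset_of_le_sum_singleton _ hC
  obtain ⟨t, -, rfl⟩ := Multiset.le_replicate_iff.1 hD
  obtain ⟨r, -, rfl⟩ := Multiset.le_replicate_iff.1 hE
  obtain ⟨IF, -, rfl⟩ := Multiset.exists_subset_of_le_sum_singleton _ hF
  exact ⟨IA, IB, IC, t, r, IF, rfl⟩

section Positions

variable {IA IB IC : Finset (Fin n)} {t r : ℕ} {IF : Finset (Fin (n+m+1))}
  {v : List (CandF m n)} {k : ℕ}

lemma mem_take_of_x_or_y {c : CandF m n} (hc : c = CandF.x ∨ c = CandF.y)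
    (hv : v ∈ subVF S IA IB IC t r IF) (hk : 1 ≤ k) (hcv : c ∈ v) : c ∈ v.take k := by
  obtain ⟨k, rfl⟩ := Nat.exists_eq_add_of_le' hk
  revert hcv
  refine subVF_induction IA IB IC t r IF v hv ?_ ?_ ?_ ?_ ?_ ?_ <;> intros <;>
    rcases hc with rfl | rfl <;> simp_all [ZlistF, BallF]

lemma z_mem_take (hn : 2 ≤ n) (hv : v ∈ subVF S IA IB IC t r IF) (hk : n ≤ k) {j : Fin n}
    (hz : CandF.z j ∈ v) : CandF.z j ∈ v.take k := by
  revert hz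
  refine subVF_induction IA IB IC t r IF v hv ?_ ?_ ?_ ?_ ?_ ?_
  · simp
  · intro i hz
    rwa [List.take_of_length_le (by simp only [List.length_cons, List.length_nil]; omega)]
  · intro i hz
    rw [List.append_assoc]
    exact List.mem_take_append_of_mem_left (by rw [length_ZminusF]; omega) (by simpa using hz)
  · intro hz
    rw [List.append_assoc]
    exact List.mem_take_append_of_mem_left (by rw [length_ZlistF]; omega) (by simp [ZlistF])
  · simp
  · simp

lemma w_notMem_take (hv : v ∈ subVF S IA IB IC t r IF) (hk : k < n) : CandF.w ∉ v.take k := by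
  refine subVF_induction IA IB IC t r IF v hv ?_ ?_ ?_ ?_ ?_ ?_
  · exact fun i h => by simpa using List.take_subset _ _ h
  · exact fun i h => by simpa using List.take_subset _ _ h
  · exact fun i => List.notMem_take_append_of_notMem_left
      (by rw [List.length_append, length_ZminusF]; omega) (by simp)
  · exact List.notMem_take_append_of_notMem_left
      (by rw [List.length_append, length_ZlistF]; omega) (by simp [ZlistF, BallF])
  · exact fun h => by simpa using List.take_subset _ _ h
  · exact fun p h => by simpa using List.take_subset _ _ h

lemma b_mem_take (hS : ∀ i, (S i).card = 3) (hv : v ∈ subVF S IA IB IC t r IF) (hk : 4 ≤ k)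
    (hw : CandF.w ∈ v → CandF.w ∈ v.take k) {j : Fin (3*m)} (hb : CandF.b j ∈ v) :
    CandF.b j ∈ v.take k := by
  revert hw hb
  refine subVF_induction IA IB IC t r IF v hv ?_ ?_ ?_ ?_ ?_ ?_
  · intro i _ hb
    rwa [List.take_of_length_le (by rw [List.length_cons, length_blistF, hS]; omega)]
  · simp
  · exact fun i hw => List.mem_take_of_last_mem_take (by simp) (hw (by simp))
  · exact fun hw => List.mem_take_of_last_mem_take (by simp [ZlistF, BallF]) (hw (by simp))
  · simp
  · simp

end Positions

/-- The candidates that, like `w`, are approved by `2n` voters of `VF m n S`. -/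
def IsRival : CandF m n → Prop
  | .y | .z _ | .b _ => True
  | .w | .x | .f _ => False

lemma apprScore_VF_w : apprScore (VF m n S) CandF.w = 2 * n := by
  rw [VF_eq_subVF, apprScore_subVF_w, Finset.card_fin]
  omega

lemma apprScore_VF_x : apprScore (VF m n S) CandF.x = n + m + 1 := by
  rw [VF_eq_subVF, apprScore_subVF_x]

lemma apprScore_VF_f (p : Fin (n+m+1)) : apprScore (VF m n S) (CandF.f p) = 1 := by
  rw [VF_eq_subVF, apprScore_subVF_f]
  simp

lemma apprScore_VF_of_isRival {c : CandF m n} (hc : IsRival c) :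
    apprScore (VF m n S) c = 2 * n := by
  cases c with
  | y =>
    rw [VF_eq_subVF, apprScore_subVF_y, Finset.card_fin]
    omega
  | z j =>
    rw [VF_eq_subVF, apprScore_subVF_z, if_pos (Finset.mem_univ j),
      Finset.card_erase_of_mem (Finset.mem_univ j), Finset.card_fin]
    have := j.pos
    omega
  | b j =>
    rw [VF_eq_subVF, apprScore_subVF_b, card_filter_mem_BiF]
    have := ellF_le (S := S) j
    simp only [ellF] at this ⊢
    omega
  | _ => exact hc.elim

lemma fwinners_VF_eq_singleton_iff (hnm : m + 1 < n) (D : Finset (CandF m n)) :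
    fwinners D (VF m n S) = {CandF.w} ↔ CandF.w ∈ D ∧ ∀ c ∈ D, ¬ IsRival c := by
  have hle : ∀ c, apprScore (VF m n S) c ≤ 2 * n := by
    intro c
    cases c
    all_goals first
      | exact (apprScore_VF_of_isRival (by trivial)).le
      | simp only [apprScore_VF_w, apprScore_VF_x, apprScore_VF_f]; omega
  have hrival : ∀ c, 2 * n ≤ apprScore (VF m n S) c → c = CandF.w ∨ IsRival c := by
    intro c hc
    cases c
    all_goals first
      | simp only [apprScore_VF_x, apprScore_VF_f] at hc; omega
      | simp [IsRival]
  have hcard : Multiset.card (VF m n S) = 6 * n + 2 * m + 2 := by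
    rw [VF_eq_subVF, card_subVF]
    simp only [Finset.card_fin]
    omega
  have hmem : ∀ {c}, c ∈ fwinners D (VF m n S) ↔
      c ∈ D ∧ ∀ d ∈ D, apprScore (VF m n S) d ≤ apprScore (VF m n S) c :=
    mem_fwinners_of_no_majority fun c _ => by
      have := hle c
      omega
  constructor
  · intro h
    have hw : CandF.w ∈ D := (hmem.1 (h ▸ Finset.mem_singleton_self _)).1
    refine ⟨hw, fun c hc hcr => ?_⟩
    have hcw : c ∈ fwinners D (VF m n S) :=
      hmem.2 ⟨hc, fun d _ => (apprScore_VF_of_isRival hcr).symm ▸ hle d⟩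
    rw [h, Finset.mem_singleton] at hcw
    subst hcw
    exact hcr
  · rintro ⟨hw, hD⟩
    ext c
    rw [hmem, Finset.mem_singleton]
    constructor
    · rintro ⟨hc, hmax⟩
      exact (hrival c (apprScore_VF_w ▸ hmax _ hw)).resolve_right (hD c hc)
    · rintro rfl
      exact ⟨hw, fun d _ => apprScore_VF_w ▸ hle d⟩

end Construction

section Reduction

open FV

variable {m n : ℕ} {S : Fin n → Finset (Fin (3*m))}
  {IA IB IC : Finset (Fin n)} {t r : ℕ} {IF : Finset (Fin (n+m+1))}

lemma eq_empty_and_eq_univ_of_apprScore_z_lt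
    (h : ∀ j, apprScore (subVF S IA IB IC t r IF) (CandF.z j) <
      apprScore (subVF S IA IB IC t r IF) CandF.w) :
    IB = ∅ ∧ IC = Finset.univ := by
  have key : ∀ j, j ∈ IC ∧ j ∉ IB := by
    intro j
    have hj := h j
    rw [apprScore_subVF_z, apprScore_subVF_w] at hj
    by_cases hjC : j ∈ IC
    · rw [Finset.card_erase_of_mem hjC] at hj
      have := Finset.card_pos.2 ⟨j, hjC⟩
      refine ⟨hjC, fun hjB => ?_⟩
      rw [if_pos hjB] at hj
      omega
    · rw [Finset.erase_eq_of_notMem hjC] at hj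
      omega
  exact ⟨Finset.eq_empty_iff_forall_notMem.2 fun j => (key j).2,
    Finset.eq_univ_iff_forall.2 fun j => (key j).1⟩

lemma shape_of_w_mem_winners (hS : ∀ i, (S i).card = 3) (hn : 4 ≤ n)
    (hw : CandF.w ∈ winners (CF m n) (subVF S IA IB IC t r IF))
    (hW : ∀ c ∈ winners (CF m n) (subVF S IA IB IC t r IF), ¬ IsRival c) :
    IB = ∅ ∧ IC = Finset.univ ∧ ∀ j, (IA.filter (j ∈ S ·)).card < ellF S j := by
  set V := subVF S IA IB IC t r IF
  have hlt : ∀ c, IsRival c → decisiveScore (CF m n) V c < decisiveScore (CF m n) V CandF.w :=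
    fun c hc => decisiveScore_lt_of_mem_winners hw (mem_CF c) fun h => hW c h hc
  have hwK : ∀ k < n, ∀ v ∈ V, CandF.w ∉ v.take k := fun k hk v hv => w_notMem_take hv hk
  have hσz : ∀ j, decisiveScore (CF m n) V (CandF.z j) = apprScore V (CandF.z j) := fun j =>
    decisiveScore_eq_apprScore hw hwK fun k hk _ v hv => z_mem_take (by omega) hv hk
  have hσw := decisiveScore_le_apprScore (C := CF m n) (V := V) CandF.w
  obtain ⟨rfl, rfl⟩ := eq_empty_and_eq_univ_of_apprScore_z_lt fun j =>
    hσz j ▸ (hlt _ (by trivial)).trans_le hσw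
  have hσw_eq : decisiveScore (CF m n) V CandF.w = apprScore V CandF.w := by
    have hz := hσz ⟨0, by omega⟩ ▸ hlt (CandF.z ⟨0, by omega⟩) (by trivial)
    rw [apprScore_subVF_z] at hz
    rw [apprScore_subVF_w] at hσw ⊢
    simp only [Finset.notMem_empty, if_false, Finset.card_erase_of_mem (Finset.mem_univ _),
      Finset.card_fin] at hz hσw ⊢
    omega
  refine ⟨rfl, rfl, fun j => ?_⟩
  have hσb : decisiveScore (CF m n) V (CandF.b j) = apprScore V (CandF.b j) :=
    decisiveScore_eq_apprScore hw hwK fun k hk hσk v hv =>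
      b_mem_take hS hv (by omega)
        (levelScore_eq_apprScore_iff.1 (congrFun hσk CandF.w ▸ hσw_eq) v hv)
  have hb := hσb ▸ hσw_eq ▸ hlt (CandF.b j) (by trivial)
  rw [apprScore_subVF_b, apprScore_subVF_w, card_filter_mem_BiF, Finset.card_fin] at hb
  have := ellF_le (S := S) j
  omega

lemma card_compl_le_of_no_rival_wins {V₂ : Multiset (List (CandF m n))}
    (hsum : subVF S IA ∅ Finset.univ t r IF + V₂ = VF m n S)
    (hW : ∀ c ∈ winners (CF m n) V₂, ¬ IsRival c) : IAᶜ.card ≤ m := by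
  have hV₂ : ∀ v ∈ V₂, v ∈ VF m n S := fun v hv => hsum ▸ Multiset.mem_add.2 (Or.inr hv)
  have happr : ∀ c, apprScore (subVF S IA ∅ Finset.univ t r IF) c + apprScore V₂ c =
      apprScore (VF m n S) c := fun c => by rw [← hsum, apprScore_add]
  obtain ⟨c, hc⟩ := winners_nonempty (V := V₂) ⟨CandF.w, mem_CF _⟩
  have hσy : decisiveScore (CF m n) V₂ CandF.y = apprScore V₂ CandF.y :=
    decisiveScore_eq_apprScore (K := 1) hc (fun k hk v _ => by simp [Nat.lt_one_iff.1 hk])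
      fun k hk _ v hv => mem_take_of_x_or_y (Or.inr rfl) (hV₂ v hv) hk
  have hy : apprScore V₂ CandF.y < apprScore V₂ c :=
    hσy ▸ (decisiveScore_lt_of_mem_winners hc (mem_CF _) fun h => hW _ h (by trivial)).trans_le
      (decisiveScore_le_apprScore c)
  have hc_le : apprScore V₂ c ≤ n + m + 1 := by
    have hc_sum := happr c
    cases c with
    | w => rw [apprScore_subVF_w, apprScore_VF_w, Finset.card_fin] at hc_sum; omega
    | x => rw [apprScore_VF_x] at hc_sum; omega
    | f p => rw [apprScore_VF_f] at hc_sum; omega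
    | _ => exact absurd (by trivial) (hW _ hc)
  have hy_sum := happr CandF.y
  rw [apprScore_subVF_y, apprScore_VF_of_isRival (by trivial), Finset.card_empty] at hy_sum
  rw [Finset.card_compl, Fintype.card_fin]
  omega

lemma exists_isExactCover_of_w_mem_winners (hS : ∀ i, (S i).card = 3) (hn : 4 ≤ n)
    {V₁ V₂ : Multiset (List (CandF m n))} (hsum : V₁ + V₂ = VF m n S)
    (hw : CandF.w ∈ winners (CF m n) V₁) (hW₁ : ∀ c ∈ winners (CF m n) V₁, ¬ IsRival c)
    (hW₂ : ∀ c ∈ winners (CF m n) V₂, ¬ IsRival c) :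
    ∃ I, IsExactCover S I := by
  obtain ⟨IA, IB, IC, t, r, IF, rfl⟩ :=
    exists_subVF_eq_of_le (hsum ▸ Multiset.le_add_right V₁ V₂)
  obtain ⟨rfl, rfl, hA⟩ := shape_of_w_mem_winners hS hn hw hW₁
  refine ⟨IAᶜ, isExactCover_of_cover S hS (fun j => ?_) ?_⟩
  · have hsplit := Finset.card_filter_add_card_filter_compl IA (j ∈ S ·)
    have hj := hA j
    obtain ⟨i, hi⟩ := Finset.card_pos.1 (show 0 < (IAᶜ.filter (j ∈ S ·)).card by
      unfold ellF at hj
      omega)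
    exact ⟨i, Finset.mem_filter.1 hi⟩
  · have := card_compl_le_of_no_rival_wins hsum hW₂
    simp only [Fintype.card_fin]
    omega

lemma winners_subVF_eq_x (hnm : m + 1 < n) {I : Finset (Fin n)} (hI : I.card ≤ m) :
    winners (CF m n) (subVF S I Finset.univ ∅ 0 (n+m+1) ∅) = {CandF.x} := by
  set V := subVF S I Finset.univ ∅ 0 (n+m+1) ∅ with hV
  have hx : levelScore V 1 CandF.x = n + m + 1 := by
    rw [levelScore_eq_apprScore_iff.2 fun v hv => mem_take_of_x_or_y (Or.inl rfl) hv le_rfl,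
      apprScore_subVF_x]
  have hcard : Multiset.card V = I.card + n + (n + m + 1) := by
    simp [V, card_subVF]
  apply winners_eq_singleton (mem_CF _)
  rw [decisiveScore_eq_levelScore_one (mem_CF CandF.x) (by omega), hx]
  intro d _ hd
  refine (levelScore_le_apprScore V 1 d).trans_lt ?_
  cases d with
  | b j =>
    rw [hV, apprScore_subVF_b, Finset.filter_empty, Finset.card_empty]
    have := Finset.card_filter_le I (j ∈ S ·)
    omega
  | f p => simp [hV, apprScore_subVF_f]
  | z j =>
    rw [hV, apprScore_subVF_z, if_pos (Finset.mem_univ j), Finset.erase_empty, Finset.card_empty]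
    omega
  | w => simp [hV, apprScore_subVF_w]
  | x => exact absurd rfl hd
  | y => rw [hV, apprScore_subVF_y, Finset.card_fin]; omega

lemma winners_subVF_compl_eq_w (hnm : m + 1 < n) {I : Finset (Fin n)} (hI : I.card ≤ m)
    (hcov : ∀ j, ∃ i ∈ I, j ∈ S i) :
    winners (CF m n) (subVF S Iᶜ ∅ Finset.univ n 0 Finset.univ) = {CandF.w} := by
  set V := subVF S Iᶜ ∅ Finset.univ n 0 Finset.univ with hV
  have hw : apprScore V CandF.w = 2 * n := by
    rw [hV, apprScore_subVF_w, Finset.card_fin]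
    omega
  have hlt : ∀ d, d ≠ CandF.w → apprScore V d < 2 * n := by
    intro d hd
    cases d with
    | b j =>
      rw [hV, apprScore_subVF_b, card_filter_mem_BiF]
      have hsplit := Finset.card_filter_add_card_filter_compl I (j ∈ S ·)
      obtain ⟨i, hi, hj⟩ := hcov j
      have : 0 < (I.filter (j ∈ S ·)).card := Finset.card_pos.2 ⟨i, Finset.mem_filter.2 ⟨hi, hj⟩⟩
      have := ellF_le (S := S) j
      simp only [ellF] at this ⊢
      omega
    | f p => rw [hV, apprScore_subVF_f, if_pos (Finset.mem_univ p)]; omega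
    | z j =>
      rw [hV, apprScore_subVF_z, if_neg (Finset.notMem_empty j),
        Finset.card_erase_of_mem (Finset.mem_univ j), Finset.card_fin]
      omega
    | w => exact absurd rfl hd
    | x => rw [hV, apprScore_subVF_x]; omega
    | y => rw [hV, apprScore_subVF_y, Finset.card_compl, Fintype.card_fin, Finset.card_empty]; omega
  have hcard : Multiset.card V = (n - I.card) + 3 * n + m + 1 := by
    simp only [V, card_subVF, Finset.card_compl, Fintype.card_fin, Finset.card_empty,
      Finset.card_fin]
    omega
  apply winners_eq_singleton (mem_CF _)
  rw [decisiveScore_eq_apprScore_of_no_majority fun d _ => ?_, hw]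
  · exact fun d _ hd => hlt d hd
  · rcases eq_or_ne d CandF.w with rfl | hd
    · omega
    · have := hlt d hd
      omega

lemma exists_partition_of_isExactCover (hnm : m + 1 < n) (hS : ∀ i, (S i).card = 3)
    {I : Finset (Fin n)} (hI : IsExactCover S I) :
    ∃ V₁ V₂ : Multiset (List (CandF m n)), V₁ + V₂ = VF m n S ∧
      fwinners (fwinners (CF m n) V₁ ∪ fwinners (CF m n) V₂) (VF m n S) = {CandF.w} := by
  have hIm : I.card ≤ m := by
    have := hI.card_mul_eq S hS
    simp only [Fintype.card_fin] at this
    omega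
  have hsum := subVF_add_subVF_compl (S := S) I Finset.univ ∅ 0 (n+m+1) ∅ (Nat.zero_le n) le_rfl
  simp only [Finset.compl_univ, Finset.compl_empty, Nat.sub_zero, Nat.sub_self] at hsum
  refine ⟨_, _, hsum, ?_⟩
  rw [fwinners_CF, fwinners_CF, winners_subVF_eq_x hnm hIm,
    winners_subVF_compl_eq_w hnm hIm fun j => (hI j).exists]
  exact (fwinners_VF_eq_singleton_iff hnm _).2 ⟨by simp, by simp [IsRival]⟩

lemma exists_isExactCover_of_partition (hnm : m + 1 < n) (hS : ∀ i, (S i).card = 3)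
    {V₁ V₂ : Multiset (List (CandF m n))} (hsum : V₁ + V₂ = VF m n S)
    (hfin : fwinners (fwinners (CF m n) V₁ ∪ fwinners (CF m n) V₂) (VF m n S) = {CandF.w}) :
    ∃ I, IsExactCover S I := by
  rcases lt_or_ge n 4 with hn | hn
  · -- then `m ≤ 1`, so every `S i` is all of `B`
    exact ⟨{⟨0, by omega⟩}, isExactCover_singleton_of_eq_univ S <|
      Finset.eq_of_subset_of_card_le (Finset.subset_univ _) (by rw [Finset.card_fin, hS]; omega)⟩
  obtain ⟨hw, hD⟩ := (fwinners_VF_eq_singleton_iff hnm _).1 hfin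
  rw [fwinners_CF, fwinners_CF] at hw hD
  have hD₁ := fun c hc => hD c (Finset.mem_union_left _ hc)
  have hD₂ := fun c hc => hD c (Finset.mem_union_right _ hc)
  rcases Finset.mem_union.1 hw with hw | hw
  · exact exists_isExactCover_of_w_mem_winners hS hn hsum hw hD₁ hD₂
  · exact exists_isExactCover_of_w_mem_winners hS hn ((add_comm V₂ V₁).trans hsum) hw hD₂ hD₁

end Reduction

theorem fv_constructive_partition_voters_TP_general
    (m n : ℕ) (hnm : m + 1 < n) (S : Fin n → Finset (Fin (3*m)))
    (hS : ∀ i, (S i).card = 3) :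
    (∃ I : Finset (Fin n), ∀ x : Fin (3*m), ∃! i : Fin n, i ∈ I ∧ x ∈ S i) ↔
    (∃ V1 V2 : Multiset (List (CandF m n)),
      V1 + V2 = VF m n S ∧
      FV.fwinners (FV.fwinners (CF m n) V1 ∪ FV.fwinners (CF m n) V2) (VF m n S)
        = {CandF.w}) :=
  ⟨fun ⟨_, hI⟩ => exists_partition_of_isExactCover hnm hS hI,
    fun ⟨_, _, hsum, hfin⟩ => exists_isExactCover_of_partition hnm hS hsum hfin⟩

/-- Correctness of the reduction showing fallback voting resistant to
constructive control by partition of voters in model TP: for the election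
`(C,V)` defined above from an X3C instance `(B,S)` with `n > m+1` (all
`‖S_i‖ = 3`, `m ≥ 1`), `S` contains an exact cover for `B` if and only if `V`
can be partitioned into disjoint sublists `V1` and `V2` such that `w` is the
unique FV winner of the final-round election `(W1 ∪ W2, V)`, where `Wi` is the
FV winner set of the subelection `(C,Vi)`. -/
theorem fv_constructive_partition_voters_TP
    (m n : ℕ) (hm : 1 ≤ m) (hnm : m + 1 < n) (S : Fin n → Finset (Fin (3*m)))
    (hS : ∀ i, (S i).card = 3) :
    (∃ I : Finset (Fin n), ∀ x : Fin (3*m), ∃! i : Fin n, i ∈ I ∧ x ∈ S i) ↔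
    (∃ V1 V2 : Multiset (List (CandF m n)),
      V1 + V2 = VF m n S ∧
      FV.fwinners (FV.fwinners (CF m n) V1 ∪ FV.fwinners (CF m n) V2) (VF m n S)
        = {CandF.w}) :=
  fv_constructive_partition_voters_TP_general m n hnm S hS
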